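/- Fix m > 0 and let ω(x) = √(m x φ(x/m)). Let T > 0, K ≥ 0, y₀ ≥ 0, and let y : [0,T] → [0,∞) be continuous and satisfy y(t) ≤ y₀ + K ∫₀^t s^{−1/2} ω(y(s)) ds for all t ∈ [0,T]. Then for every t ∈ [0,T], ∫_{(y₀, y(t)]} 1/ω(r) dr ≤ 2 K √t (the integral being interpreted as 0 when y(t) ≤ y₀). -/

import Mathlib

/-!
Let `B(t) = y₀ + K ∫₀ᵗ s^{-1/2} ω(y(s)) ds` be the right-hand side of the hypothesis.
Since `ω` is increasing and `y ≤ B`, `B'(t) = K t^{-1/2} ω(y(t)) ≤ K t^{-1/2} ω(B(t))`;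
separating variables, `t ↦ ∫_{y₀}^{B(t)} dr/ω(r) - 2K√t` has nonpositive derivative and
vanishes at `0`, and `∫_{(y₀, y(t)]} dr/ω ≤ ∫_{y₀}^{B(t)} dr/ω`. This needs `y₀ > 0`, so that
`1/ω` is continuous on `[y₀, ∞)`; in general the lower limit is raised above `y₀` and then
lowered back to it by monotone convergence.

On the first branch `(x (log x)²)' = log x (log x + 2) ≥ 0` because `log x ≤ -1-√2`, and
the two branches of `φ` agree at `e^{-1-√2}` since `(1+√2)² = 3 + 2√2`; so `φ`, and with
it `ω`, is continuous and increasing on `[0, ∞)`.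
-/

open Real Set MeasureTheory
open scoped ENNReal

noncomputable section

/-- The concave modulus `φ` from the paper: `φ(x) = x (log x)²` for
`x ≤ e^{-1-√2}` (with `φ(0) = 0`, using `log 0 = 0`), and
`φ(x) = x + 2(1+√2)e^{-1-√2}` beyond the junction point. -/
def phi (x : ℝ) : ℝ :=
  if x ≤ Real.exp (-1 - Real.sqrt 2) then x * Real.log x ^ 2
  else x + 2 * (1 + Real.sqrt 2) * Real.exp (-1 - Real.sqrt 2)

/-- The modulus `ω(x) = √(m x φ(x/m))` associated with mass `m`. -/
def omega (m x : ℝ) : ℝ := Real.sqrt (m * x * phi (x / m))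

local notation "ξ" => Real.exp (-1 - √2)

lemma log_le_neg_two_of_le_junction {x : ℝ} (hx : 0 < x) (hxξ : x ≤ ξ) : log x ≤ -2 := by
  have h := log_le_log hx hxξ
  rw [log_exp] at h
  linarith [one_lt_sqrt_two]

lemma eqOn_phi_Icc : EqOn phi (fun x => x * log x ^ 2) (Icc 0 ξ) :=
  fun _ hx => if_pos hx.2

lemma eqOn_phi_Ici : EqOn phi (fun x => x + 2 * (1 + √2) * ξ) (Ici ξ) := by
  intro x hx
  rcases (mem_Ici.1 hx).eq_or_lt with rfl | hlt
  · have h2 : √2 ^ 2 = 2 := sq_sqrt zero_le_two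
    rw [eqOn_phi_Icc ⟨(exp_pos _).le, le_rfl⟩]
    simp only [log_exp]
    linear_combination ξ * h2
  · exact if_neg hlt.not_ge

lemma continuousOn_mul_log_sq : ContinuousOn (fun x => x * log x ^ 2) (Ici 0) := by
  -- on `x ≥ 0`, `x (log x)² = 4 (√x log √x)²`, and `u ↦ u log u` is continuous at `0`
  have h : EqOn (fun x => 4 * (√x * log √x) ^ 2) (fun x => x * log x ^ 2) (Ici 0) := by
    intro x hx
    dsimp only
    rw [log_sqrt hx, mul_pow, sq_sqrt hx]
    ring
  exact ((continuous_mul_log.comp continuous_sqrt).pow 2).const_mul 4 |>.continuousOn.congr h.symm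

lemma monotoneOn_mul_log_sq : MonotoneOn (fun x => x * log x ^ 2) (Icc 0 ξ) := by
  refine monotoneOn_of_deriv_nonneg (convex_Icc 0 ξ)
    (continuousOn_mul_log_sq.mono Icc_subset_Ici_self) ?_ fun x hx => ?_ <;> rw [interior_Icc] at *
  · exact fun x hx => (differentiableAt_id.mul
      ((differentiableAt_log hx.1.ne').pow 2)).differentiableWithinAt
  · have hd : HasDerivAt (fun x => x * log x ^ 2)
        (1 * log x ^ 2 + x * (2 * log x ^ 1 * x⁻¹)) x :=
      (hasDerivAt_id x).mul ((hasDerivAt_log hx.1.ne').pow 2)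
    have hlog := log_le_neg_two_of_le_junction hx.1 hx.2.le
    rw [hd.deriv, mul_comm x, mul_assoc, inv_mul_cancel₀ hx.1.ne']
    nlinarith

lemma continuousOn_phi : ContinuousOn phi (Ici 0) := by
  rw [← Icc_union_Ici_eq_Ici (exp_pos _).le]
  exact ((continuousOn_mul_log_sq.mono Icc_subset_Ici_self).congr eqOn_phi_Icc).union_of_isClosed
    ((continuous_add_const _).continuousOn.congr eqOn_phi_Ici) isClosed_Icc isClosed_Ici

lemma monotoneOn_phi : MonotoneOn phi (Ici 0) := by
  rw [← Icc_union_Ici_eq_Ici (exp_pos _).le]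
  exact (monotoneOn_mul_log_sq.congr eqOn_phi_Icc.symm).union_right
    ((monotone_id.add_const _).monotoneOn _ |>.congr eqOn_phi_Ici.symm)
    (isGreatest_Icc (exp_pos _).le) isLeast_Ici

lemma phi_pos {x : ℝ} (hx : 0 < x) : 0 < phi x := by
  rcases le_or_gt x ξ with hxξ | hxξ
  · rw [eqOn_phi_Icc ⟨hx.le, hxξ⟩]
    have hlog := log_le_neg_two_of_le_junction hx hxξ
    exact mul_pos hx (by nlinarith)
  · rw [eqOn_phi_Ici hxξ.le]
    positivity

lemma phi_nonneg {x : ℝ} (hx : 0 ≤ x) : 0 ≤ phi x := by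
  rcases hx.eq_or_lt with rfl | hx
  · simp [eqOn_phi_Icc ⟨le_rfl, (exp_pos _).le⟩]
  · exact (phi_pos hx).le

lemma continuousOn_omega {m : ℝ} (hm : 0 < m) : ContinuousOn (omega m) (Ici 0) :=
  ((continuousOn_const.mul continuousOn_id).mul (continuousOn_phi.comp
    (continuousOn_id.div_const m) fun _ hx => div_nonneg hx hm.le)).sqrt

lemma monotoneOn_omega {m : ℝ} (hm : 0 < m) : MonotoneOn (omega m) (Ici 0) := by
  intro a ha b hb hab
  have ha' : 0 ≤ a / m := div_nonneg ha hm.le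
  have hb' : 0 ≤ b / m := div_nonneg hb hm.le
  exact sqrt_le_sqrt (mul_le_mul (by gcongr) (monotoneOn_phi ha' hb' (by gcongr))
    (phi_nonneg ha') (mul_nonneg hm.le hb))

lemma omega_pos {m x : ℝ} (hm : 0 < m) (hx : 0 < x) : 0 < omega m x :=
  sqrt_pos.2 (mul_pos (mul_pos hm hx) (phi_pos (div_pos hx hm)))

lemma inv_sqrt_eq_rpow {s : ℝ} (hs : 0 ≤ s) : (√s)⁻¹ = s ^ (-(1 / 2) : ℝ) := by
  rw [rpow_neg hs, sqrt_eq_rpow]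

lemma intervalIntegrable_inv_sqrt {T : ℝ} (hT : 0 ≤ T) :
    IntervalIntegrable (fun s => (√s)⁻¹) volume 0 T :=
  (intervalIntegral.intervalIntegrable_rpow' (by norm_num)).congr fun s hs =>
    (inv_sqrt_eq_rpow (uIoc_of_le hT ▸ hs).1.le).symm

lemma integral_inv_sqrt {t : ℝ} (ht : 0 ≤ t) :
    ∫ s in (0 : ℝ)..t, (√s)⁻¹ = 2 * √t := by
  rw [intervalIntegral.integral_congr fun s hs => inv_sqrt_eq_rpow (uIcc_of_le ht ▸ hs).1,
    integral_rpow (Or.inl (by norm_num)), sqrt_eq_rpow]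
  norm_num
  ring

lemma setLIntegral_Ioc_le_of_forall_lt {f : ℝ → ℝ≥0∞} {a b : ℝ} {C : ℝ≥0∞}
    (h : ∀ a', a < a' → ∫⁻ x in Ioc a' b, f x ≤ C) : ∫⁻ x in Ioc a b, f x ≤ C := by
  have hmono : Monotone fun n : ℕ => Ioc (a + 1 / (n + 1)) b := fun n k hnk =>
    Ioc_subset_Ioc_left (by gcongr)
  have hU : ⋃ n : ℕ, Ioc (a + 1 / (n + 1)) b = Ioc a b := by
    ext x
    simp only [mem_iUnion, mem_Ioc]
    refine ⟨fun ⟨n, hn⟩ => ⟨(le_add_of_nonneg_right (by positivity)).trans_lt hn.1, hn.2⟩,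
      fun hx => ?_⟩
    obtain ⟨n, hn⟩ := exists_nat_one_div_lt (sub_pos.2 hx.1)
    exact ⟨n, by linarith, hx.2⟩
  -- continuity from below of the measure `volume.withDensity f`
  rw [← withDensity_apply _ measurableSet_Ioc, ← hU]
  refine le_of_tendsto' (tendsto_measure_iUnion_atTop hmono) fun n => ?_
  rw [Function.comp_apply, withDensity_apply _ measurableSet_Ioc]
  exact h _ (lt_add_of_pos_right a (by positivity))

lemma continuousOn_primitive_Icc {f : ℝ → ℝ} {a b : ℝ} (hab : a ≤ b)
    (hf : IntervalIntegrable f volume a b) :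
    ContinuousOn (fun t => ∫ s in a..t, f s) (Icc a b) := by
  simpa only [uIcc_of_le hab] using
    intervalIntegral.continuousOn_primitive_interval' hf left_mem_uIcc

lemma hasDerivAt_primitive_of_mem_Ioo {f : ℝ → ℝ} {a b t : ℝ}
    (hf : IntervalIntegrable f volume a b) (hf_cont : ContinuousOn f (Ioo a b))
    (ht : t ∈ Ioo a b) : HasDerivAt (fun t => ∫ s in a..t, f s) (f t) t :=
  intervalIntegral.integral_hasDerivAt_right
    (hf.mono_set (by simp [uIcc_of_le ht.1.le, uIcc_of_le (ht.1.trans ht.2).le,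
      Icc_subset_Icc_right ht.2.le]))
    (hf_cont.stronglyMeasurableAtFilter isOpen_Ioo t ht)
    (hf_cont.continuousAt (isOpen_Ioo.mem_nhds ht))

theorem integral_one_div_le_integral_of_hasDerivAt_le {ω v B b : ℝ → ℝ} {T t : ℝ}
    (hω : ContinuousOn ω (Ioi 0)) (hω_pos : ∀ x, 0 < x → 0 < ω x)
    (hv : IntervalIntegrable v volume 0 T) (hv_cont : ContinuousOn v (Ioo 0 T))
    (hB : ContinuousOn B (Icc 0 T)) (hB_pos : ∀ t ∈ Icc 0 T, 0 < B t)
    (hB' : ∀ t ∈ Ioo 0 T, HasDerivAt B (b t) t) (hb : ∀ t ∈ Ioo 0 T, b t ≤ v t * ω (B t))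
    (ht : t ∈ Icc 0 T) :
    ∫ r in B 0..B t, 1 / ω r ≤ ∫ s in (0 : ℝ)..t, v s := by
  have hT : 0 ≤ T := ht.1.trans ht.2
  have hB0 : 0 < B 0 := hB_pos 0 (left_mem_Icc.2 hT)
  have hinv : ContinuousOn (fun r => 1 / ω r) (Ioi 0) :=
    continuousOn_const.div hω fun x hx => (hω_pos x hx).ne'
  have hF : ∀ u, 0 < u → HasDerivAt (fun u => ∫ r in B 0..u, 1 / ω r) (1 / ω u) u :=
    fun u hu => intervalIntegral.integral_hasDerivAt_right
      ((hinv.mono fun r hr => (lt_min hB0 hu).trans_le hr.1).intervalIntegrable)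
      (hinv.stronglyMeasurableAtFilter isOpen_Ioi u hu) (hinv.continuousAt (Ioi_mem_nhds hu))
  set H := fun t => (∫ r in B 0..B t, 1 / ω r) - ∫ s in (0 : ℝ)..t, v s
  have hH : ∀ t ∈ Ioo 0 T, HasDerivAt H (1 / ω (B t) * b t - v t) t := fun t ht =>
    ((hF _ (hB_pos t (Ioo_subset_Icc_self ht))).comp t (hB' t ht)).sub
      (hasDerivAt_primitive_of_mem_Ioo hv hv_cont ht)
  have hH_anti : AntitoneOn H (Icc 0 T) := by
    refine antitoneOn_of_deriv_nonpos (convex_Icc 0 T)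
      ((ContinuousOn.comp (fun u hu => (hF u hu).continuousAt.continuousWithinAt) hB hB_pos).sub
        (continuousOn_primitive_Icc hT hv))
      ?_ fun t ht => ?_ <;> rw [interior_Icc] at *
    · exact fun t ht => (hH t ht).differentiableAt.differentiableWithinAt
    · rw [(hH t ht).deriv, sub_nonpos, one_div_mul_eq_div,
        div_le_iff₀ (hω_pos _ (hB_pos t (Ioo_subset_Icc_self ht)))]
      exact hb t ht
  simpa [H] using hH_anti (left_mem_Icc.2 hT) ht ht.1

lemma ofReal_intervalIntegral_eq_setLIntegral_Ioc {f : ℝ → ℝ} {a b : ℝ} (hab : a ≤ b)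
    (hf : IntervalIntegrable f volume a b) (hf_nonneg : ∀ x ∈ Ioc a b, 0 ≤ f x) :
    ENNReal.ofReal (∫ x in a..b, f x) = ∫⁻ x in Ioc a b, ENNReal.ofReal (f x) := by
  rw [intervalIntegral.integral_of_le hab,
    ofReal_integral_eq_lintegral_ofReal hf.1
      (ae_restrict_of_forall_mem measurableSet_Ioc hf_nonneg)]

lemma nonneg_of_continuousOn_Ici_of_pos {ω : ℝ → ℝ} (hω : ContinuousOn ω (Ici 0))
    (hω_pos : ∀ x, 0 < x → 0 < ω x) {x : ℝ} (hx : 0 ≤ x) : 0 ≤ ω x := by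
  rcases hx.eq_or_lt with rfl | hx
  · exact ge_of_tendsto ((hω 0 self_mem_Ici).mono Ioi_subset_Ici_self)
      (eventually_nhdsWithin_of_forall fun x hx => (hω_pos x hx).le)
  · exact (hω_pos x hx).le

theorem lintegral_one_div_le_of_le_add_integral {ω w y : ℝ → ℝ} {T K y₀ t : ℝ}
    (hω : ContinuousOn ω (Ici 0)) (hω_mono : MonotoneOn ω (Ici 0))
    (hω_pos : ∀ x, 0 < x → 0 < ω x) (hw : IntervalIntegrable w volume 0 T)
    (hw_cont : ContinuousOn w (Ioo 0 T)) (hw_nonneg : ∀ s, 0 ≤ w s) (hK : 0 ≤ K)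
    (hy₀ : 0 < y₀)
    (hy : ContinuousOn y (Icc 0 T)) (hy_nonneg : ∀ t ∈ Icc 0 T, 0 ≤ y t)
    (hineq : ∀ t ∈ Icc 0 T, y t ≤ y₀ + K * ∫ s in (0 : ℝ)..t, w s * ω (y s))
    (ht : t ∈ Icc 0 T) :
    ∫⁻ r in Ioc y₀ (y t), ENNReal.ofReal (1 / ω r) ≤
      ENNReal.ofReal (K * ∫ s in (0 : ℝ)..t, w s) := by
  have hT : 0 ≤ T := ht.1.trans ht.2
  set g := fun s => w s * ω (y s)
  set B := fun t => y₀ + K * ∫ s in (0 : ℝ)..t, g s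
  have hωy : ContinuousOn (fun s => ω (y s)) (Icc 0 T) := hω.comp hy hy_nonneg
  have hg : IntervalIntegrable g volume 0 T := hw.mul_continuousOn (by rwa [uIcc_of_le hT])
  have hg_cont : ContinuousOn g (Ioo 0 T) := hw_cont.mul (hωy.mono Ioo_subset_Icc_self)
  have hB_ge : ∀ t ∈ Icc 0 T, y₀ ≤ B t := fun t ht =>
    le_add_of_nonneg_right (mul_nonneg hK (intervalIntegral.integral_nonneg ht.1 fun s hs =>
      mul_nonneg (hw_nonneg s) (nonneg_of_continuousOn_Ici_of_pos hω hω_pos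
        (hy_nonneg s ⟨hs.1, hs.2.trans ht.2⟩))))
  have hB : ContinuousOn B (Icc 0 T) :=
    continuousOn_const.add (continuousOn_const.mul (continuousOn_primitive_Icc hT hg))
  have hB' : ∀ t ∈ Ioo 0 T, HasDerivAt B (K * g t) t := fun t ht =>
    ((hasDerivAt_primitive_of_mem_Ioo hg hg_cont ht).const_mul K).const_add y₀
  have hb : ∀ t ∈ Ioo 0 T, K * g t ≤ K * w t * ω (B t) := fun t ht => by
    have ht' := Ioo_subset_Icc_self ht
    rw [mul_assoc]
    exact mul_le_mul_of_nonneg_left (mul_le_mul_of_nonneg_left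
      (hω_mono (hy_nonneg t ht') (hy₀.le.trans (hB_ge t ht')) (hineq t ht')) (hw_nonneg t)) hK
  have hsep := integral_one_div_le_integral_of_hasDerivAt_le (hω.mono Ioi_subset_Ici_self)
    hω_pos (hw.const_mul K) (continuousOn_const.mul hw_cont) hB
    (fun t ht => hy₀.trans_le (hB_ge t ht)) hB' hb ht
  rw [intervalIntegral.integral_const_mul] at hsep
  have hBt : y₀ ≤ B t := hB_ge t ht
  have hint : IntervalIntegrable (fun r => 1 / ω r) volume y₀ (B t) := by
    refine ContinuousOn.intervalIntegrable (continuousOn_const.div (hω.mono ?_) fun r hr => ?_)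
    all_goals rw [uIcc_of_le hBt] at *
    · exact fun r hr => hy₀.le.trans hr.1
    · exact (hω_pos r (hy₀.trans_le hr.1)).ne'
  calc ∫⁻ r in Ioc y₀ (y t), ENNReal.ofReal (1 / ω r)
      ≤ ∫⁻ r in Ioc y₀ (B t), ENNReal.ofReal (1 / ω r) :=
        lintegral_mono_set (Ioc_subset_Ioc_right (hineq t ht))
    _ = ENNReal.ofReal (∫ r in y₀..B t, 1 / ω r) :=
        (ofReal_intervalIntegral_eq_setLIntegral_Ioc hBt hint fun r hr =>
          one_div_nonneg.2 (hω_pos r (hy₀.trans hr.1)).le).symm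
    _ ≤ ENNReal.ofReal (K * ∫ s in (0 : ℝ)..t, w s) := by
        refine ENNReal.ofReal_le_ofReal ?_
        simpa [B] using hsep

theorem osgood_gronwall_weighted_general (m : ℝ) (hm : 0 < m) (T K y₀ : ℝ)
    (hK : 0 ≤ K) (hy₀ : 0 ≤ y₀) (y : ℝ → ℝ)
    (hc : ContinuousOn y (Set.Icc 0 T))
    (hnn : ∀ t ∈ Set.Icc 0 T, 0 ≤ y t)
    (hineq : ∀ t ∈ Set.Icc 0 T,
      y t ≤ y₀ + K * ∫ s in (0:ℝ)..t, (Real.sqrt s)⁻¹ * omega m (y s)) :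
    ∀ t ∈ Set.Icc 0 T,
      ∫⁻ r in Set.Ioc y₀ (y t), ENNReal.ofReal (1 / omega m r)
        ≤ ENNReal.ofReal (2 * K * Real.sqrt t) := by
  intro t ht
  have hT : 0 ≤ T := ht.1.trans ht.2
  refine setLIntegral_Ioc_le_of_forall_lt fun a ha => ?_
  have h := lintegral_one_div_le_of_le_add_integral (continuousOn_omega hm) (monotoneOn_omega hm)
    (fun _ => omega_pos hm) (intervalIntegrable_inv_sqrt hT)
    (continuous_sqrt.continuousOn.inv₀ fun s hs => (sqrt_pos.2 hs.1).ne')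
    (fun s => inv_nonneg.2 (sqrt_nonneg s)) hK (hy₀.trans_lt ha) hc hnn
    (fun s hs => (hineq s hs).trans (by linarith)) ht
  rwa [integral_inv_sqrt ht.1, mul_left_comm, ← mul_assoc] at h

/-- an Osgood–Grönwall estimate with the singular weight
`s^{-1/2}`. If a continuous nonnegative function `y` on `[0,T]` satisfies
`y(t) ≤ y₀ + K ∫₀ᵗ s^{-1/2} ω(y(s)) ds`, then
`∫_{(y₀, y(t)]} dr/ω(r) ≤ 2K√t` for every `t ∈ [0,T]`. -/
theorem osgood_gronwall_weighted (m : ℝ) (hm : 0 < m) (T K y₀ : ℝ) (hT : 0 < T)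
    (hK : 0 ≤ K) (hy₀ : 0 ≤ y₀) (y : ℝ → ℝ)
    (hc : ContinuousOn y (Set.Icc 0 T))
    (hnn : ∀ t ∈ Set.Icc 0 T, 0 ≤ y t)
    (hineq : ∀ t ∈ Set.Icc 0 T,
      y t ≤ y₀ + K * ∫ s in (0:ℝ)..t, (Real.sqrt s)⁻¹ * omega m (y s)) :
    ∀ t ∈ Set.Icc 0 T,
      ∫⁻ r in Set.Ioc y₀ (y t), ENNReal.ofReal (1 / omega m r)
        ≤ ENNReal.ofReal (2 * K * Real.sqrt t) :=
  osgood_gronwall_weighted_general m hm T K y₀ hK hy₀ y hc hnn hineq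

end
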